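/- Let two Grassmannian configurations be given by projections {Π_{1,i}} in G_{m₁,n₁} and {Π_{2,j}} in G_{m₂,n₂} with minimal squared chordal distances d₁² and d₂². Then the Kronecker products {Π_{1,i} ⊗ Π_{2,j}} form a configuration in G_{m₁m₂, n₁n₂} whose minimal squared chordal distance equals min(m₁·d₂², m₂·d₁²). -/

import Mathlib

/-! Since the trace is multiplicative on Kronecker products, for projections `P, Q` of rank `m`
and `P', Q'` of rank `m'` one has `d_c²(P ⊗ P', Q ⊗ Q') = m m' - t t'` with `t = Tr(PQ)`,
`t' = Tr(P'Q')`. For projections `Tr(PQ) = Tr((PQ)ᴴ(PQ))`, so `0 ≤ t ≤ m` and `0 ≤ t' ≤ m'`.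
If the first factors agree the distance is `m · d_c²(P', Q')`; otherwise it is
`m' · d_c²(P, Q) + t · d_c²(P', Q') ≥ m' · d_c²(P, Q)`. Pairs differing in one factor only attain
both bounds. -/

open scoped Matrix

/-- Orthogonal projection onto a subspace, as an endomorphism. -/
noncomputable def proj {n : ℕ} (W : Submodule ℂ (EuclideanSpace ℂ (Fin n))) :
    EuclideanSpace ℂ (Fin n) →ₗ[ℂ] EuclideanSpace ℂ (Fin n) :=
  W.subtype ∘ₗ W.orthogonalProjectionOnto.toLinearMap

/-- Squared chordal distance between two subspaces:
`Trace(Π_P) - Trace(Π_P Π_Q)`. -/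
noncomputable def dc2 {n : ℕ} (P Q : Submodule ℂ (EuclideanSpace ℂ (Fin n))) : ℝ :=
  (LinearMap.trace ℂ _ (proj P) - LinearMap.trace ℂ _ (proj P ∘ₗ proj Q)).re

/-- The action of a group element on `ℂⁿ` through a unitary representation. -/
noncomputable def act {n : ℕ} {G : Type*} [Group G]
    (ρ : G →* Matrix.unitaryGroup (Fin n) ℂ) (g : G) :
    EuclideanSpace ℂ (Fin n) →ₗ[ℂ] EuclideanSpace ℂ (Fin n) :=
  Matrix.toEuclideanLin (ρ g : Matrix (Fin n) (Fin n) ℂ)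

/-- Irreducibility of a unitary matrix representation. -/
def IsIrred {n : ℕ} {G : Type*} [Group G] (ρ : G →* Matrix.unitaryGroup (Fin n) ℂ) : Prop :=
  ∀ U : Submodule ℂ (EuclideanSpace ℂ (Fin n)), (∀ g : G, U.map (act ρ g) ≤ U) → U = ⊥ ∨ U = ⊤

/-- The character of a unitary matrix representation. -/
noncomputable def charOf {n : ℕ} {G : Type*} [Group G]
    (ρ : G →* Matrix.unitaryGroup (Fin n) ℂ) (g : G) : ℂ :=
  (ρ g : Matrix (Fin n) (Fin n) ℂ).trace

/-- `χ` is the character of some irreducible unitary representation of `G`. -/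
def IsIrredChar {G : Type*} [Group G] (χ : G → ℂ) : Prop :=
  ∃ (d : ℕ) (σ : G →* Matrix.unitaryGroup (Fin d) ℂ), IsIrred σ ∧ ∀ g, χ g = charOf σ g

/-- Two pairs of subspaces have the same set of principal angles iff they are in the same
orbit of the unitary group. -/
def samePA {n : ℕ} (P Q P' Q' : Submodule ℂ (EuclideanSpace ℂ (Fin n))) : Prop :=
  ∃ U : EuclideanSpace ℂ (Fin n) ≃ₗᵢ[ℂ] EuclideanSpace ℂ (Fin n),
    P.map U.toLinearEquiv.toLinearMap = P' ∧ Q.map U.toLinearEquiv.toLinearMap = Q'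

/-- The isotypic subspace of a unitary representation `ρ` of `H` associated to a character
`χ` : the sum of all `H`-invariant subspaces on which the representation has character `χ`. -/
noncomputable def isotypic {n : ℕ} {H : Type*} [Group H]
    (ρ : H →* Matrix.unitaryGroup (Fin n) ℂ) (χ : H → ℂ) :
    Submodule ℂ (EuclideanSpace ℂ (Fin n)) :=
  sSup {U : Submodule ℂ (EuclideanSpace ℂ (Fin n)) |
    ∃ hU : ∀ (h : H), ∀ x ∈ U, act ρ h x ∈ U,
      ∀ h : H, LinearMap.trace ℂ U ((act ρ h).restrict (hU h)) = χ h}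

/-- Squared chordal distance in terms of projection matrices. -/
noncomputable def dc2M {ι : Type*} [Fintype ι] (P Q : Matrix ι ι ℂ) : ℝ :=
  (P.trace - (P * Q).trace).re

open Kronecker ComplexOrder

namespace Matrix

variable {ι κ : Type*} [Fintype ι] [Fintype κ]

theorem trace_mul_nonneg_of_isStarProjection {𝕜 : Type*} [RCLike 𝕜] {P Q : Matrix ι ι 𝕜}
    (hP : IsStarProjection P) (hQ : IsStarProjection Q) : 0 ≤ (P * Q).trace := by
  have hPQ : (P * Q)ᴴ * (P * Q) = Q * (P * Q) := by
    rw [conjTranspose_mul, hP.isSelfAdjoint.isHermitian.eq, hQ.isSelfAdjoint.isHermitian.eq,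
      Matrix.mul_assoc, ← Matrix.mul_assoc P, hP.isIdempotentElem.eq]
  have : (P * Q).trace = (Q * (P * Q)).trace := by
    rw [trace_mul_comm Q, Matrix.mul_assoc, hQ.isIdempotentElem.eq]
  exact this ▸ hPQ ▸ (posSemidef_conjTranspose_mul_self (P * Q)).trace_nonneg

theorem trace_mul_le_trace_of_isStarProjection {𝕜 : Type*} [RCLike 𝕜] [DecidableEq ι]
    {P Q : Matrix ι ι 𝕜} (hP : IsStarProjection P) (hQ : IsStarProjection Q) :
    (P * Q).trace ≤ P.trace := by
  have := trace_mul_nonneg_of_isStarProjection hP hQ.one_sub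
  rwa [Matrix.mul_sub, Matrix.mul_one, trace_sub, sub_nonneg] at this

end Matrix

open Matrix

variable {ι κ : Type*} [Fintype ι] [Fintype κ]

theorem dc2M_nonneg_of_isStarProjection [DecidableEq ι] {P Q : Matrix ι ι ℂ}
    (hP : IsStarProjection P) (hQ : IsStarProjection Q) : 0 ≤ dc2M P Q :=
  Complex.nonneg_iff.mp (sub_nonneg.mpr (trace_mul_le_trace_of_isStarProjection hP hQ)) |>.1

theorem im_trace_mul_eq_zero_of_isStarProjection {P Q : Matrix ι ι ℂ} (hP : IsStarProjection P)
    (hQ : IsStarProjection Q) : (P * Q).trace.im = 0 :=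
  (Complex.nonneg_iff.mp (trace_mul_nonneg_of_isStarProjection hP hQ)).2.symm

theorem dc2M_kronecker {P Q : Matrix ι ι ℂ} {P' Q' : Matrix κ κ ℂ} (hP : P.trace.im = 0)
    (hPQ : (P * Q).trace.im = 0) :
    dc2M (P ⊗ₖ P') (Q ⊗ₖ Q') =
      P.trace.re * P'.trace.re - (P * Q).trace.re * (P' * Q').trace.re := by
  simp only [dc2M, ← mul_kronecker_mul, trace_kronecker, Complex.sub_re, Complex.mul_re, hP, hPQ]
  ring

theorem dc2M_kronecker_of_isStarProjection {P Q : Matrix ι ι ℂ} {P' Q' : Matrix κ κ ℂ}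
    (hP : IsStarProjection P) (hQ : IsStarProjection Q) :
    dc2M (P ⊗ₖ P') (Q ⊗ₖ Q') =
      P.trace.re * P'.trace.re - (P * Q).trace.re * (P' * Q').trace.re := by
  refine dc2M_kronecker ?_ (im_trace_mul_eq_zero_of_isStarProjection hP hQ)
  simpa only [hP.isIdempotentElem.eq] using im_trace_mul_eq_zero_of_isStarProjection hP hP

theorem dc2M_kronecker_self_left {P : Matrix ι ι ℂ} {P' Q' : Matrix κ κ ℂ}
    (hP : IsStarProjection P) :
    dc2M (P ⊗ₖ P') (P ⊗ₖ Q') = P.trace.re * dc2M P' Q' := by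
  rw [dc2M_kronecker_of_isStarProjection hP hP, hP.isIdempotentElem.eq, dc2M, Complex.sub_re]
  ring

theorem dc2M_kronecker_self_right {P Q : Matrix ι ι ℂ} {P' : Matrix κ κ ℂ}
    (hP : IsStarProjection P) (hQ : IsStarProjection Q) (hP' : IsIdempotentElem P') :
    dc2M (P ⊗ₖ P') (Q ⊗ₖ P') = P'.trace.re * dc2M P Q := by
  rw [dc2M_kronecker_of_isStarProjection hP hQ, hP'.eq, dc2M, Complex.sub_re]
  ring

theorem mul_dc2M_le_dc2M_kronecker [DecidableEq κ] {P Q : Matrix ι ι ℂ} {P' Q' : Matrix κ κ ℂ}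
    (hP : IsStarProjection P) (hQ : IsStarProjection Q) (hP' : IsStarProjection P')
    (hQ' : IsStarProjection Q') :
    P'.trace.re * dc2M P Q ≤ dc2M (P ⊗ₖ P') (Q ⊗ₖ Q') := by
  have hPQ := (Complex.nonneg_iff.mp (trace_mul_nonneg_of_isStarProjection hP hQ)).1
  have hP'Q' := dc2M_nonneg_of_isStarProjection hP' hQ'
  rw [dc2M_kronecker_of_isStarProjection hP hQ]
  rw [dc2M, Complex.sub_re] at hP'Q' ⊢
  nlinarith [mul_nonneg hPQ hP'Q']

open Kronecker in
theorem stmt12_general {n₁ n₂ m₁ m₂ N₁ N₂ : ℕ} (d₁ d₂ : ℝ)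
    (P₁ : Fin N₁ → Matrix (Fin n₁) (Fin n₁) ℂ) (P₂ : Fin N₂ → Matrix (Fin n₂) (Fin n₂) ℂ)
    (hherm₁ : ∀ i, (P₁ i).IsHermitian) (hidem₁ : ∀ i, P₁ i * P₁ i = P₁ i)
    (htr₁ : ∀ i, (P₁ i).trace = (m₁ : ℂ))
    (hherm₂ : ∀ i, (P₂ i).IsHermitian) (hidem₂ : ∀ i, P₂ i * P₂ i = P₂ i)
    (htr₂ : ∀ i, (P₂ i).trace = (m₂ : ℂ))
    (hmin₁ : (∀ i j, i ≠ j → d₁ ≤ dc2M (P₁ i) (P₁ j)) ∧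
      ∃ i j, i ≠ j ∧ dc2M (P₁ i) (P₁ j) = d₁)
    (hmin₂ : (∀ i j, i ≠ j → d₂ ≤ dc2M (P₂ i) (P₂ j)) ∧
      ∃ i j, i ≠ j ∧ dc2M (P₂ i) (P₂ j) = d₂) :
    (∀ p q : Fin N₁ × Fin N₂, p ≠ q →
      min ((m₁ : ℝ) * d₂) ((m₂ : ℝ) * d₁) ≤ dc2M (P₁ p.1 ⊗ₖ P₂ p.2) (P₁ q.1 ⊗ₖ P₂ q.2)) ∧
    (∃ p q : Fin N₁ × Fin N₂, p ≠ q ∧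
      dc2M (P₁ p.1 ⊗ₖ P₂ p.2) (P₁ q.1 ⊗ₖ P₂ q.2) = min ((m₁ : ℝ) * d₂) ((m₂ : ℝ) * d₁)) := by
  obtain ⟨hlb₁, i₁, j₁, hij₁, rfl⟩ := hmin₁
  obtain ⟨hlb₂, p₂, q₂, hpq₂, rfl⟩ := hmin₂
  have hP₁ (i) : IsStarProjection (P₁ i) := ⟨hidem₁ i, hherm₁ i⟩
  have hP₂ (p) : IsStarProjection (P₂ p) := ⟨hidem₂ p, hherm₂ p⟩
  have hsame_fst (i p q) : dc2M (P₁ i ⊗ₖ P₂ p) (P₁ i ⊗ₖ P₂ q) = m₁ * dc2M (P₂ p) (P₂ q) := by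
    simp [dc2M_kronecker_self_left (hP₁ i), htr₁]
  have hsame_snd (i j p) : dc2M (P₁ i ⊗ₖ P₂ p) (P₁ j ⊗ₖ P₂ p) = m₂ * dc2M (P₁ i) (P₁ j) := by
    simp [dc2M_kronecker_self_right (hP₁ i) (hP₁ j) (hidem₂ p), htr₂]
  refine ⟨?_, ?_⟩
  · rintro ⟨i, p⟩ ⟨j, q⟩ hne
    obtain rfl | hij := eq_or_ne i j
    · have hpq : p ≠ q := fun h => hne (h ▸ rfl)
      rw [hsame_fst]
      exact (min_le_left _ _).trans (mul_le_mul_of_nonneg_left (hlb₂ p q hpq) m₁.cast_nonneg)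
    · have := mul_dc2M_le_dc2M_kronecker (hP₁ i) (hP₁ j) (hP₂ p) (hP₂ q)
      rw [htr₂, Complex.natCast_re] at this
      exact (min_le_right _ _).trans
        ((mul_le_mul_of_nonneg_left (hlb₁ i j hij) m₂.cast_nonneg).trans this)
  · rcases le_total ((m₁ : ℝ) * dc2M (P₂ p₂) (P₂ q₂)) (m₂ * dc2M (P₁ i₁) (P₁ j₁)) with h | h
    · exact ⟨(i₁, p₂), (i₁, q₂), by simp [hpq₂], by rw [hsame_fst, min_eq_left h]⟩
    · exact ⟨(i₁, p₂), (j₁, p₂), by simp [hij₁], by rw [hsame_snd, min_eq_right h]⟩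

open Kronecker in
/-- Kronecker products of two Grassmannian configurations with minimal
squared chordal distances `d₁², d₂²` form a configuration in `G_{m₁m₂,n₁n₂}` with minimal
squared chordal distance `min(m₁·d₂², m₂·d₁²)`. -/
theorem stmt12 {n₁ n₂ m₁ m₂ N₁ N₂ : ℕ} (d₁ d₂ : ℝ)
    (P₁ : Fin N₁ → Matrix (Fin n₁) (Fin n₁) ℂ) (P₂ : Fin N₂ → Matrix (Fin n₂) (Fin n₂) ℂ)
    (hherm₁ : ∀ i, (P₁ i).IsHermitian) (hidem₁ : ∀ i, P₁ i * P₁ i = P₁ i)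
    (htr₁ : ∀ i, (P₁ i).trace = (m₁ : ℂ)) (hdist₁ : ∀ i j, i ≠ j → P₁ i ≠ P₁ j)
    (hherm₂ : ∀ i, (P₂ i).IsHermitian) (hidem₂ : ∀ i, P₂ i * P₂ i = P₂ i)
    (htr₂ : ∀ i, (P₂ i).trace = (m₂ : ℂ)) (hdist₂ : ∀ i j, i ≠ j → P₂ i ≠ P₂ j)
    (hmin₁ : (∀ i j, i ≠ j → d₁ ≤ dc2M (P₁ i) (P₁ j)) ∧
      ∃ i j, i ≠ j ∧ dc2M (P₁ i) (P₁ j) = d₁)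
    (hmin₂ : (∀ i j, i ≠ j → d₂ ≤ dc2M (P₂ i) (P₂ j)) ∧
      ∃ i j, i ≠ j ∧ dc2M (P₂ i) (P₂ j) = d₂) :
    (∀ p q : Fin N₁ × Fin N₂, p ≠ q →
      min ((m₁ : ℝ) * d₂) ((m₂ : ℝ) * d₁) ≤ dc2M (P₁ p.1 ⊗ₖ P₂ p.2) (P₁ q.1 ⊗ₖ P₂ q.2)) ∧
    (∃ p q : Fin N₁ × Fin N₂, p ≠ q ∧
      dc2M (P₁ p.1 ⊗ₖ P₂ p.2) (P₁ q.1 ⊗ₖ P₂ q.2) = min ((m₁ : ℝ) * d₂) ((m₂ : ℝ) * d₁)) :=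
  stmt12_general d₁ d₂ P₁ P₂ hherm₁ hidem₁ htr₁ hherm₂ hidem₂ htr₂ hmin₁ hmin₂
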